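/- Let X be a Lévy process, let γ>0 satisfy E[e^{γ X_1}]=1, and suppose ψ'(γ) := E[X_1 e^{γ X_1}] is finite and positive. Fix v with 0<v<ψ'(γ). Then for all sequences t_n→∞ and x_n with (x_n−v t_n)/t_n^{1/2}→0, one has e^{γ x_n} P( t_n < τ(x_n) < ∞ ) → 0. -/

import Mathlib

open MeasureTheory ProbabilityTheory Filter Set

/-- A (real-valued) Lévy process: `X 0 = 0` a.s., a.s. càdlàg paths on `[0,∞)`,
and stationary independent increments. -/
structure LevyProcess {Ω : Type*} [MeasurableSpace Ω] (P : Measure Ω)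
    (X : ℝ → Ω → ℝ) : Prop where
  meas : ∀ t : ℝ, Measurable (X t)
  init : ∀ᵐ ω ∂P, X 0 ω = 0
  rightCont : ∀ᵐ ω ∂P, ∀ t : ℝ, 0 ≤ t →
    ContinuousWithinAt (fun s => X s ω) (Set.Ici t) t
  leftLimits : ∀ᵐ ω ∂P, ∀ t : ℝ, 0 < t →
    ∃ l : ℝ, Filter.Tendsto (fun s => X s ω) (nhdsWithin t (Set.Ico 0 t)) (nhds l)
  stat : ∀ s t : ℝ, 0 ≤ s → s ≤ t →
    Measure.map (fun ω => X t ω - X s ω) P = Measure.map (X (t - s)) P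
  indep : ∀ s t : ℝ, 0 ≤ s → s ≤ t →
    Indep (⨆ u ∈ Set.Icc (0:ℝ) s, MeasurableSpace.comap (X u) inferInstance)
      (MeasurableSpace.comap (fun ω => X t ω - X s ω) inferInstance) P

/-- The Laplace exponent `ψ(θ) = log E[exp (θ W)]`. -/
noncomputable def laplaceExponent {Ω : Type*} [MeasurableSpace Ω] (P : Measure Ω)
    (W : Ω → ℝ) (θ : ℝ) : ℝ :=
  Real.log (∫ ω, Real.exp (θ * W ω) ∂P)

/-- The domain `Θ = {θ : E[exp (θ W)] < ∞}` of the Laplace exponent. -/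
def laplaceDomain {Ω : Type*} [MeasurableSpace Ω] (P : Measure Ω)
    (W : Ω → ℝ) : Set ℝ :=
  {θ : ℝ | Integrable (fun ω => Real.exp (θ * W ω)) P}

/-!
Right-continuity lets a passage over `x` after time `t` be detected on a dyadic grid of times
started at `N = ⌊t⌋`. Since `E[e^{γ X_q}] = 1` at rational times `q`, the process
`1{X_N ≤ x} e^{γ X}` is a martingale along such a grid, and Doob's maximal inequality gives
`e^{γ x} P(t < τ(x) < ∞) ≤ E[e^{γ X_N}; X_N ≤ x]`. Along the given sequences `x ≤ a N` eventually,
for some `a < ψ'(γ)`, and a Chernoff bound with exponent `γ - θ` bounds the right side by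
`(e^{θ a} E[e^{(γ-θ) X_1}])^N`. The tangent-line estimate
`E[e^{(γ-θ) X_1}] ≤ 1 - θ E[X_1 e^{(γ-θ) X_1}]` and continuity of the last expectation in `θ`
make the base smaller than `1` for small `θ > 0`.
-/

open scoped ENNReal Topology

lemma abs_mul_exp_le {c β γ : ℝ} (hc : 0 < c) (hcβ : c ≤ β) (hβγ : β ≤ γ) (y : ℝ) :
    |y * Real.exp (β * y)| ≤ |y * Real.exp (γ * y)| + c⁻¹ := by
  rcases le_or_gt 0 y with hy | hy
  · have : |y * Real.exp (β * y)| ≤ |y * Real.exp (γ * y)| := by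
      rw [abs_of_nonneg (by positivity), abs_of_nonneg (by positivity)]
      gcongr
    linarith [inv_pos.2 hc]
  · have hexp : Real.exp (β * y) ≤ Real.exp (c * y) := Real.exp_le_exp.2 (by nlinarith)
    have hkey : -y * Real.exp (c * y) ≤ c⁻¹ := by
      rw [inv_eq_one_div, le_div_iff₀' hc]
      calc c * (-y * Real.exp (c * y)) = (c * -y) * Real.exp (c * y) := by ring
        _ ≤ Real.exp (c * -y) * Real.exp (c * y) := by
          gcongr; linarith [Real.add_one_le_exp (c * -y)]
        _ = 1 := by rw [← Real.exp_add]; simp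
    rw [abs_of_neg (mul_neg_of_neg_of_pos hy (Real.exp_pos _))]
    nlinarith [abs_nonneg (y * Real.exp (γ * y))]

lemma measurable_ofReal_exp_mul (β : ℝ) :
    Measurable fun y : ℝ => ENNReal.ofReal (Real.exp (β * y)) := by fun_prop

def dyadicGrid (r : ℚ) (n k : ℕ) : ℚ := r + k / 2 ^ n

lemma dyadicGrid_mono (r : ℚ) (n : ℕ) : Monotone (dyadicGrid r n) := fun _ _ hjk => by
  unfold dyadicGrid; gcongr

lemma dyadicGrid_succ (r : ℚ) (n k : ℕ) : dyadicGrid r (n + 1) (2 * k) = dyadicGrid r n k := by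
  simp only [dyadicGrid, pow_succ]; push_cast; field_simp

lemma tendsto_dyadicGrid_ceil {r : ℚ} {s : ℝ} (hrs : (r : ℝ) ≤ s) :
    Tendsto (fun n => (dyadicGrid r n ⌈(s - r) * 2 ^ n⌉₊ : ℝ)) atTop (𝓝[≥] s) := by
  have hpow : Tendsto (fun n : ℕ => ((2 : ℝ) ^ n)⁻¹) atTop (𝓝 0) :=
    tendsto_inv_atTop_zero.comp (tendsto_pow_atTop_atTop_of_one_lt one_lt_two)
  have hbounds (n : ℕ) : s ≤ (dyadicGrid r n ⌈(s - r) * 2 ^ n⌉₊ : ℝ)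
      ∧ (dyadicGrid r n ⌈(s - r) * 2 ^ n⌉₊ : ℝ) ≤ s + ((2 : ℝ) ^ n)⁻¹ := by
    have h2n : (0 : ℝ) < 2 ^ n := by positivity
    have hceil := Nat.ceil_lt_add_one (mul_nonneg (sub_nonneg.2 hrs) h2n.le)
    have hle := Nat.le_ceil ((s - r) * 2 ^ n)
    simp only [dyadicGrid]; push_cast
    constructor
    · rw [← sub_le_iff_le_add', le_div_iff₀ h2n]; linarith
    · have : (⌈(s - r) * 2 ^ n⌉₊ : ℝ) / 2 ^ n ≤ s - r + (2 ^ n)⁻¹ := by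
        rw [div_le_iff₀ h2n, add_mul, inv_mul_cancel₀ h2n.ne']; linarith
      linarith
  refine tendsto_nhdsWithin_iff.2 ⟨?_, Eventually.of_forall fun n => (hbounds n).1⟩
  exact tendsto_of_tendsto_of_tendsto_of_le_of_le tendsto_const_nhds
    (by simpa using tendsto_const_nhds.add hpow) (fun n => (hbounds n).1) fun n => (hbounds n).2

section ExponentialTilt

variable {Ω : Type*} [MeasurableSpace Ω] {P : Measure Ω} {Y : Ω → ℝ} {γ : ℝ}

lemma integrable_mul_exp_of_le [IsFiniteMeasure P] (hY : Measurable Y) {c β : ℝ} (hc : 0 < c)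
    (hcβ : c ≤ β) (hβγ : β ≤ γ) (hint : Integrable (fun ω => Y ω * Real.exp (γ * Y ω)) P) :
    Integrable (fun ω => Y ω * Real.exp (β * Y ω)) P :=
  (hint.abs.add (integrable_const c⁻¹)).mono' (by fun_prop)
    (ae_of_all _ fun ω => abs_mul_exp_le hc hcβ hβγ (Y ω))

lemma tendsto_integral_mul_exp [IsFiniteMeasure P] (hY : Measurable Y) (hγ : 0 < γ)
    (hint : Integrable (fun ω => Y ω * Real.exp (γ * Y ω)) P) :
    Tendsto (fun β => ∫ ω, Y ω * Real.exp (β * Y ω) ∂P) (𝓝[<] γ)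
      (𝓝 (∫ ω, Y ω * Real.exp (γ * Y ω) ∂P)) := by
  refine tendsto_integral_filter_of_dominated_convergence
    (fun ω => |Y ω * Real.exp (γ * Y ω)| + (γ / 2)⁻¹) (Eventually.of_forall fun β => by fun_prop)
    ?_ (hint.abs.add (integrable_const _)) (ae_of_all _ fun ω => ?_)
  · filter_upwards [Ioo_mem_nhdsLT (half_lt_self hγ)] with β hβ
    exact ae_of_all _ fun ω => abs_mul_exp_le (half_pos hγ) hβ.1.le hβ.2.le (Y ω)
  · exact ((continuous_const.mul ((continuous_id.mul continuous_const).rexp)).tendsto γ).mono_left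
      nhdsWithin_le_nhds

/-- Tangent-line bound for `β ↦ e^{β y}` at `γ`, integrated. -/
lemma lintegral_exp_le_one_sub (hγ1 : ∫ ω, Real.exp (γ * Y ω) ∂P = 1) (θ : ℝ)
    (hint : Integrable (fun ω => Y ω * Real.exp ((γ - θ) * Y ω)) P) :
    ∫⁻ ω, ENNReal.ofReal (Real.exp ((γ - θ) * Y ω)) ∂P
      ≤ ENNReal.ofReal (1 - θ * ∫ ω, Y ω * Real.exp ((γ - θ) * Y ω) ∂P) := by
  have hexp : Integrable (fun ω => Real.exp (γ * Y ω)) P :=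
    Integrable.of_integral_ne_zero (by rw [hγ1]; exact one_ne_zero)
  have hpt (y : ℝ) :
      Real.exp ((γ - θ) * y) ≤ Real.exp (γ * y) - θ * (y * Real.exp ((γ - θ) * y)) := by
    have h := mul_le_mul_of_nonneg_left (Real.add_one_le_exp (θ * y))
      (Real.exp_nonneg ((γ - θ) * y))
    rw [← Real.exp_add, show (γ - θ) * y + θ * y = γ * y by ring] at h
    linarith
  have hg := hexp.sub (hint.const_mul θ)
  calc ∫⁻ ω, ENNReal.ofReal (Real.exp ((γ - θ) * Y ω)) ∂P
      ≤ ∫⁻ ω, ENNReal.ofReal (Real.exp (γ * Y ω) - θ * (Y ω * Real.exp ((γ - θ) * Y ω))) ∂P :=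
        lintegral_mono fun ω => ENNReal.ofReal_le_ofReal (hpt (Y ω))
    _ = ENNReal.ofReal (∫ ω, Real.exp (γ * Y ω) - θ * (Y ω * Real.exp ((γ - θ) * Y ω)) ∂P) :=
        (ofReal_integral_eq_lintegral_ofReal hg
          (ae_of_all _ fun ω => (Real.exp_nonneg _).trans (hpt (Y ω)))).symm
    _ = _ := by rw [integral_sub hexp (hint.const_mul θ), integral_const_mul, hγ1]

lemma exists_ofReal_exp_mul_lintegral_lt_one [IsProbabilityMeasure P] (hY : Measurable Y)
    (hγ : 0 < γ) (hγ1 : ∫ ω, Real.exp (γ * Y ω) ∂P = 1)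
    (hint : Integrable (fun ω => Y ω * Real.exp (γ * Y ω)) P) {a : ℝ}
    (ha : a < ∫ ω, Y ω * Real.exp (γ * Y ω) ∂P) :
    ∃ θ, 0 < θ ∧ ENNReal.ofReal (Real.exp (θ * a))
      * ∫⁻ ω, ENNReal.ofReal (Real.exp ((γ - θ) * Y ω)) ∂P < 1 := by
  obtain ⟨β, hβa, hβ⟩ := (((tendsto_integral_mul_exp hY hγ hint).eventually
    (eventually_gt_nhds ha)).and (Ioo_mem_nhdsLT (half_lt_self hγ))).exists
  set E := ∫ ω, Y ω * Real.exp (β * Y ω) ∂P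
  refine ⟨γ - β, sub_pos.2 hβ.2, ?_⟩
  have hβ' : γ - (γ - β) = β := by ring
  have hint' := integrable_mul_exp_of_le hY (half_pos hγ) hβ.1.le hβ.2.le hint
  have hlt : Real.exp ((γ - β) * a) * (1 - (γ - β) * E) < 1 := by
    have h1 : 1 - (γ - β) * E < Real.exp (-((γ - β) * a)) := by
      nlinarith [Real.add_one_le_exp (-((γ - β) * a)), sub_pos.2 hβ.2]
    calc Real.exp ((γ - β) * a) * (1 - (γ - β) * E)
        < Real.exp ((γ - β) * a) * Real.exp (-((γ - β) * a)) :=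
          mul_lt_mul_of_pos_left h1 (Real.exp_pos _)
      _ = 1 := by rw [← Real.exp_add, add_neg_cancel, Real.exp_zero]
  calc ENNReal.ofReal (Real.exp ((γ - β) * a))
        * ∫⁻ ω, ENNReal.ofReal (Real.exp ((γ - (γ - β)) * Y ω)) ∂P
      ≤ ENNReal.ofReal (Real.exp ((γ - β) * a)) * ENNReal.ofReal (1 - (γ - β) * E) := by
        gcongr
        simpa only [hβ'] using
          lintegral_exp_le_one_sub hγ1 (γ - β) (by simpa only [hβ'] using hint')
    _ = ENNReal.ofReal (Real.exp ((γ - β) * a) * (1 - (γ - β) * E)) :=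
        (ENNReal.ofReal_mul (Real.exp_nonneg _)).symm
    _ < 1 := ENNReal.ofReal_lt_one.2 hlt

end ExponentialTilt

namespace LevyProcess

variable {Ω : Type*} {X : ℝ → Ω → ℝ}

abbrev past (X : ℝ → Ω → ℝ) (s : ℝ) : MeasurableSpace Ω :=
  ⨆ u ∈ Icc (0 : ℝ) s, MeasurableSpace.comap (X u) inferInstance

lemma measurable_past {s u : ℝ} (hu : u ∈ Icc 0 s) : Measurable[past X s] (X u) :=
  Measurable.of_comap_le <| le_biSup (fun u => MeasurableSpace.comap (X u) inferInstance) hu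

lemma past_mono {s t : ℝ} (hst : s ≤ t) : past X s ≤ past X t :=
  biSup_mono fun _ hu => ⟨hu.1, hu.2.trans hst⟩

variable [MeasurableSpace Ω] {P : Measure Ω}

lemma past_le (hX : LevyProcess P X) (s : ℝ) : past X s ≤ ‹MeasurableSpace Ω› :=
  iSup₂_le fun u _ => (hX.meas u).comap_le

def pastFiltration (hX : LevyProcess P X) {ι : Type*} [Preorder ι] (τ : ι → ℝ)
    (hτ : Monotone τ) : Filtration ι ‹MeasurableSpace Ω› :=
  ⟨fun i => past X (τ i), fun _ _ hij => past_mono (hτ hij), fun _ => past_le hX _⟩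

lemma indepFun_increment (hX : LevyProcess P X) {s t : ℝ} (hs : 0 ≤ s) (hst : s ≤ t)
    {E : Type*} [MeasurableSpace E] {W : Ω → E} (hW : Measurable[past X s] W) :
    IndepFun W (fun ω => X t ω - X s ω) P :=
  indep_of_indep_of_le_left (hX.indep s t hs hst) hW.comap_le

/-- `E[e^{β X_t}]`, valued in `ℝ≥0∞` so that it makes sense before integrability is known. -/
noncomputable def expMoment (P : Measure Ω) (X : ℝ → Ω → ℝ) (β t : ℝ) : ℝ≥0∞ :=
  ∫⁻ ω, ENNReal.ofReal (Real.exp (β * X t ω)) ∂P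

lemma lintegral_exp_increment (hX : LevyProcess P X) (β : ℝ) {s t : ℝ} (hs : 0 ≤ s)
    (hst : s ≤ t) :
    ∫⁻ ω, ENNReal.ofReal (Real.exp (β * (X t ω - X s ω))) ∂P = expMoment P X β (t - s) := by
  have hincr : Measurable fun ω => X t ω - X s ω := (hX.meas t).sub (hX.meas s)
  rw [← lintegral_map (measurable_ofReal_exp_mul β) hincr, hX.stat s t hs hst,
    lintegral_map (measurable_ofReal_exp_mul β) (hX.meas _), expMoment]

lemma setLIntegral_exp_eq_mul (hX : LevyProcess P X) (β : ℝ) {s t : ℝ} (hs : 0 ≤ s)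
    (hst : s ≤ t) {A : Set Ω} (hA : MeasurableSet[past X s] A) :
    ∫⁻ ω in A, ENNReal.ofReal (Real.exp (β * X t ω)) ∂P
      = (∫⁻ ω in A, ENNReal.ofReal (Real.exp (β * X s ω)) ∂P) * expMoment P X β (t - s) := by
  set F : Ω → ℝ≥0∞ := A.indicator fun ω => ENNReal.ofReal (Real.exp (β * X s ω))
  have hF : Measurable[past X s] F :=
    ((measurable_ofReal_exp_mul β).comp (measurable_past ⟨hs, le_rfl⟩)).indicator hA
  have hsplit : A.indicator (fun ω => ENNReal.ofReal (Real.exp (β * X t ω)))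
      = fun ω => F ω * ENNReal.ofReal (Real.exp (β * (X t ω - X s ω))) := by
    ext ω
    by_cases hω : ω ∈ A
    · simp only [F, indicator_of_mem hω, ← ENNReal.ofReal_mul (Real.exp_nonneg _),
        ← Real.exp_add, mul_sub, add_sub_cancel]
    · simp [F, hω]
  have hAm : MeasurableSet A := past_le hX s A hA
  have hincr : Measurable fun ω => X t ω - X s ω := (hX.meas t).sub (hX.meas s)
  rw [← lintegral_indicator hAm, hsplit,
    lintegral_mul_eq_lintegral_mul_lintegral_of_indepFun''
      (g := fun ω => ENNReal.ofReal (Real.exp (β * (X t ω - X s ω))))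
      (hF.mono (past_le hX s) le_rfl).aemeasurable
      ((measurable_ofReal_exp_mul β).comp hincr).aemeasurable
      ((indepFun_increment hX hs hst hF).comp measurable_id (measurable_ofReal_exp_mul β)),
    lintegral_indicator hAm, lintegral_exp_increment hX β hs hst]

lemma expMoment_add (hX : LevyProcess P X) (β : ℝ) {s t : ℝ} (hs : 0 ≤ s) (ht : 0 ≤ t) :
    expMoment P X β (s + t) = expMoment P X β s * expMoment P X β t := by
  simpa [expMoment] using
    setLIntegral_exp_eq_mul (P := P) hX β hs (le_add_of_nonneg_right ht) MeasurableSet.univ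

lemma expMoment_eq_one_of_integral {β t : ℝ} (h : ∫ ω, Real.exp (β * X t ω) ∂P = 1) :
    expMoment P X β t = 1 := by
  rw [expMoment, ← ofReal_integral_eq_lintegral_ofReal
    (Integrable.of_integral_ne_zero (by rw [h]; exact one_ne_zero))
    (ae_of_all _ fun _ => Real.exp_nonneg _), h, ENNReal.ofReal_one]

/-- The event `{t < τ(x) < ∞}`, with `τ(x)` the first passage time of `X` over `x`. -/
def ruinAfter (X : ℝ → Ω → ℝ) (t x : ℝ) : Set Ω :=
  {ω | (∀ s : ℝ, 0 ≤ s → s ≤ t → X s ω ≤ x) ∧ ∃ s : ℝ, 0 ≤ s ∧ x < X s ω}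

lemma ae_exists_dyadicGrid_crossing (hX : LevyProcess P X) {r : ℚ} (hr : 0 ≤ r) {t : ℝ}
    (hrt : (r : ℝ) ≤ t) (x : ℝ) :
    ∀ᵐ ω ∂P, ω ∈ ruinAfter X t x →
      ∃ n : ℕ, X r ω ≤ x ∧ ∃ k ≤ 4 ^ n, x < X (dyadicGrid r n k) ω := by
  filter_upwards [hX.rightCont] with ω hrc ⟨hle, s, hs0, hxs⟩
  have hts : t < s := lt_of_not_ge fun h => (hle s hs0 h).not_gt hxs
  have hcross : ∀ᶠ u in 𝓝[≥] s, x < X u ω := (hrc s hs0).eventually (lt_mem_nhds hxs)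
  have hsize : ∀ᶠ n : ℕ in atTop, s - r ≤ 2 ^ n :=
    (tendsto_pow_atTop_atTop_of_one_lt one_lt_two).eventually_ge_atTop _
  obtain ⟨n, hn, hsn⟩ :=
    (((tendsto_dyadicGrid_ceil (hrt.trans hts.le)).eventually hcross).and hsize).exists
  refine ⟨n, hle r (by exact_mod_cast hr) hrt, _, ?_, hn⟩
  rw [Nat.ceil_le]
  calc (s - r) * 2 ^ n ≤ 2 ^ n * 2 ^ n := by gcongr
    _ = ((4 ^ n : ℕ) : ℝ) := by push_cast; rw [← mul_pow]; norm_num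

variable [IsProbabilityMeasure P]

lemma expMoment_zero (hX : LevyProcess P X) (β : ℝ) : expMoment P X β 0 = 1 := by
  rw [expMoment, lintegral_congr_ae (g := fun _ => 1), lintegral_const, measure_univ, one_mul]
  filter_upwards [hX.init] with ω hω
  simp [hω]

lemma expMoment_nat_mul (hX : LevyProcess P X) (β : ℝ) (n : ℕ) {u : ℝ} (hu : 0 ≤ u) :
    expMoment P X β (n * u) = expMoment P X β u ^ n := by
  induction n with
  | zero => simpa using expMoment_zero hX β
  | succ n ih =>
    rw [Nat.cast_succ, add_mul, one_mul, expMoment_add hX β (by positivity) hu, ih, pow_succ]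

/-- `expMoment (1 / d) ^ d = expMoment 1 = 1` forces `expMoment (1 / d) = 1`. -/
lemma expMoment_ratCast (hX : LevyProcess P X) {β : ℝ} (h1 : expMoment P X β 1 = 1) {q : ℚ}
    (hq : 0 ≤ q) : expMoment P X β q = 1 := by
  have hden : expMoment P X β (q.den : ℝ)⁻¹ = 1 := by
    have h := expMoment_nat_mul (P := P) hX β q.den (u := (q.den : ℝ)⁻¹) (by positivity)
    rw [mul_inv_cancel₀ (by exact_mod_cast q.den_nz), h1, ← one_pow q.den] at h
    exact (ENNReal.pow_right_strictMono q.den_nz).injective h.symm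
  have hnum : ((q.num.toNat : ℕ) : ℝ) = q.num := by
    exact_mod_cast Int.toNat_of_nonneg (Rat.num_nonneg.2 hq)
  rw [Rat.cast_def, div_eq_mul_inv, ← hnum, expMoment_nat_mul hX β _ (by positivity), hden,
    one_pow]

lemma integrable_exp_ratCast (hX : LevyProcess P X) {β : ℝ} (h1 : expMoment P X β 1 = 1)
    {q : ℚ} (hq : 0 ≤ q) : Integrable (fun ω => Real.exp (β * X q ω)) P := by
  refine ⟨((hX.meas q).const_mul β).exp.aestronglyMeasurable, ?_⟩
  rw [hasFiniteIntegral_iff_ofReal (ae_of_all _ fun _ => Real.exp_nonneg _)]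
  exact (expMoment_ratCast hX h1 hq).trans_lt ENNReal.one_lt_top

lemma setIntegral_exp_ratCast_eq (hX : LevyProcess P X) {β : ℝ} (h1 : expMoment P X β 1 = 1)
    {p q : ℚ} (hp : 0 ≤ p) (hpq : p ≤ q) {A : Set Ω} (hA : MeasurableSet[past X p] A) :
    ∫ ω in A, Real.exp (β * X q ω) ∂P = ∫ ω in A, Real.exp (β * X p ω) ∂P := by
  have hmeas (r : ℝ) : AEStronglyMeasurable (fun ω => Real.exp (β * X r ω)) (P.restrict A) :=
    ((hX.meas r).const_mul β).exp.aestronglyMeasurable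
  rw [integral_eq_lintegral_of_nonneg_ae (ae_of_all _ fun _ => Real.exp_nonneg _) (hmeas _),
    integral_eq_lintegral_of_nonneg_ae (ae_of_all _ fun _ => Real.exp_nonneg _) (hmeas _),
    setLIntegral_exp_eq_mul hX β (by exact_mod_cast hp) (by exact_mod_cast hpq) hA,
    ← Rat.cast_sub, expMoment_ratCast hX h1 (sub_nonneg.2 hpq), mul_one]

lemma martingale_indicator_exp (hX : LevyProcess P X) {β : ℝ} (h1 : expMoment P X β 1 = 1)
    {τ : ℕ → ℚ} (hτ : Monotone τ) (hτ0 : 0 ≤ τ 0) {B : Set Ω}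
    (hB : MeasurableSet[past X (τ 0)] B) :
    Martingale (fun k => B.indicator fun ω => Real.exp (β * X (τ k) ω))
      (hX.pastFiltration (fun k => (τ k : ℝ)) (Rat.cast_mono.comp hτ)) P := by
  have hτnn (k : ℕ) : 0 ≤ τ k := hτ0.trans (hτ k.zero_le)
  have hBm : MeasurableSet B := past_le hX _ B hB
  refine martingale_of_setIntegral_eq_succ (fun k => ?_)
    (fun k => (integrable_exp_ratCast hX h1 (hτnn k)).indicator hBm) (fun k A hA => ?_)
  · refine (Measurable.indicator ?_
      (past_mono (Rat.cast_le.2 (hτ k.zero_le)) B hB)).stronglyMeasurable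
    exact ((measurable_past ⟨by exact_mod_cast hτnn k, le_rfl⟩).const_mul β).exp
  · have hAB : MeasurableSet[past X (τ k)] (A ∩ B) :=
      hA.inter (past_mono (Rat.cast_le.2 (hτ k.zero_le)) B hB)
    rw [setIntegral_indicator hBm, setIntegral_indicator hBm,
      setIntegral_exp_ratCast_eq hX h1 (hτnn k) (hτ k.le_succ) hAB]

/-- Doob's maximal inequality for the martingale of `martingale_indicator_exp`. -/
lemma ofReal_exp_mul_measure_crossing_le (hX : LevyProcess P X) {β : ℝ} (hβ : 0 ≤ β)
    (h1 : expMoment P X β 1 = 1) {τ : ℕ → ℚ} (hτ : Monotone τ) (hτ0 : 0 ≤ τ 0) (x : ℝ)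
    (n : ℕ) :
    ENNReal.ofReal (Real.exp (β * x)) * P {ω | X (τ 0) ω ≤ x ∧ ∃ k ≤ n, x < X (τ k) ω}
      ≤ ∫⁻ ω in {ω | X (τ 0) ω ≤ x}, ENNReal.ofReal (Real.exp (β * X (τ 0) ω)) ∂P := by
  set B := {ω | X (τ 0) ω ≤ x}
  have hB : MeasurableSet[past X (τ 0)] B :=
    measurableSet_le (measurable_past ⟨by exact_mod_cast hτ0, le_rfl⟩) measurable_const
  have hBm : MeasurableSet B := past_le hX _ B hB
  set f : ℕ → Ω → ℝ := fun k => B.indicator fun ω => Real.exp (β * X (τ k) ω)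
  have hmart := martingale_indicator_exp hX h1 hτ hτ0 hB
  have hf_nonneg : 0 ≤ f := fun k ω => indicator_nonneg (fun _ _ => Real.exp_nonneg _) ω
  set S := {ω | ((Real.exp (β * x)).toNNReal : ℝ)
    ≤ (Finset.range (n + 1)).sup' Finset.nonempty_range_add_one fun k => f k ω}
  have hsub : {ω | X (τ 0) ω ≤ x ∧ ∃ k ≤ n, x < X (τ k) ω} ⊆ S := by
    rintro ω ⟨hω, k, hkn, hxk⟩
    refine Finset.le_sup'_of_le (fun k => f k ω) (Finset.mem_range.2 (Nat.lt_succ_of_le hkn)) ?_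
    simp only [f, B, indicator_of_mem (show ω ∈ B from hω), Real.coe_toNNReal _ (Real.exp_nonneg _)]
    exact Real.exp_le_exp.2 (mul_le_mul_of_nonneg_left hxk.le hβ)
  calc ENNReal.ofReal (Real.exp (β * x)) * P {ω | X (τ 0) ω ≤ x ∧ ∃ k ≤ n, x < X (τ k) ω}
      ≤ (Real.exp (β * x)).toNNReal * P S :=
        mul_le_mul' le_rfl (measure_mono hsub)
    _ ≤ ENNReal.ofReal (∫ ω in S, f n ω ∂P) := maximal_ineq hmart.submartingale hf_nonneg n
    _ ≤ ENNReal.ofReal (∫ ω, f n ω ∂P) := ENNReal.ofReal_le_ofReal <|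
        setIntegral_le_integral (hmart.integrable n) (ae_of_all _ (hf_nonneg n))
    _ = ENNReal.ofReal (∫ ω in B, Real.exp (β * X (τ 0) ω) ∂P) := by
        rw [integral_indicator hBm, setIntegral_exp_ratCast_eq hX h1 hτ0 (hτ n.zero_le) hB]
    _ = _ := ofReal_integral_eq_lintegral_ofReal (integrable_exp_ratCast hX h1 hτ0).integrableOn
        (ae_of_all _ fun _ => Real.exp_nonneg _)

lemma ofReal_exp_mul_measure_ruinAfter_le (hX : LevyProcess P X) {β : ℝ} (hβ : 0 ≤ β)
    (h1 : expMoment P X β 1 = 1) {r : ℚ} (hr : 0 ≤ r) {t : ℝ} (hrt : (r : ℝ) ≤ t) (x : ℝ) :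
    ENNReal.ofReal (Real.exp (β * x)) * P (ruinAfter X t x)
      ≤ ∫⁻ ω in {ω | X r ω ≤ x}, ENNReal.ofReal (Real.exp (β * X r ω)) ∂P := by
  set D : ℕ → Set Ω := fun n => {ω | X r ω ≤ x ∧ ∃ k ≤ 4 ^ n, x < X (dyadicGrid r n k) ω}
  have hD : Monotone D := monotone_nat_of_le_succ fun n ω ⟨hω, k, hk, hxk⟩ =>
    ⟨hω, 2 * k, by rw [pow_succ]; omega, by rwa [dyadicGrid_succ]⟩
  have hbound (n : ℕ) : ENNReal.ofReal (Real.exp (β * x)) * P (D n)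
      ≤ ∫⁻ ω in {ω | X r ω ≤ x}, ENNReal.ofReal (Real.exp (β * X r ω)) ∂P := by
    have h0 : dyadicGrid r n 0 = r := by simp [dyadicGrid]
    have h := ofReal_exp_mul_measure_crossing_le hX hβ h1 (dyadicGrid_mono r n) (h0.symm ▸ hr) x
      (4 ^ n)
    rwa [h0] at h
  calc ENNReal.ofReal (Real.exp (β * x)) * P (ruinAfter X t x)
      ≤ ENNReal.ofReal (Real.exp (β * x)) * P (⋃ n, D n) := by
        refine mul_le_mul' le_rfl (measure_mono_ae ?_)
        exact (ae_exists_dyadicGrid_crossing hX hr hrt x).mono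
          fun ω h hω => show ω ∈ ⋃ n, D n from mem_iUnion.2 (h hω)
    _ = ⨆ n, ENNReal.ofReal (Real.exp (β * x)) * P (D n) := by
        rw [hD.measure_iUnion, ENNReal.mul_iSup]
    _ ≤ _ := iSup_le hbound

lemma setLIntegral_exp_le_pow (hX : LevyProcess P X) (γ : ℝ) {θ : ℝ} (hθ : 0 ≤ θ) (a : ℝ)
    (N : ℕ) :
    ∫⁻ ω in {ω | X N ω ≤ a * N}, ENNReal.ofReal (Real.exp (γ * X N ω)) ∂P
      ≤ (ENNReal.ofReal (Real.exp (θ * a)) * expMoment P X (γ - θ) 1) ^ N := by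
  have hS : MeasurableSet {ω | X N ω ≤ a * N} := measurableSet_le (hX.meas _) measurable_const
  calc ∫⁻ ω in {ω | X N ω ≤ a * N}, ENNReal.ofReal (Real.exp (γ * X N ω)) ∂P
      ≤ ∫⁻ ω in {ω | X N ω ≤ a * N}, ENNReal.ofReal (Real.exp (θ * (a * N)))
          * ENNReal.ofReal (Real.exp ((γ - θ) * X N ω)) ∂P := by
        refine setLIntegral_mono' hS fun ω (hω : X N ω ≤ a * N) => ?_
        rw [← ENNReal.ofReal_mul (Real.exp_nonneg _), ← Real.exp_add]
        exact ENNReal.ofReal_le_ofReal (Real.exp_le_exp.2 (by nlinarith))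
    _ ≤ ∫⁻ ω, ENNReal.ofReal (Real.exp (θ * (a * N)))
          * ENNReal.ofReal (Real.exp ((γ - θ) * X N ω)) ∂P := setLIntegral_le_lintegral _ _
    _ = ENNReal.ofReal (Real.exp (θ * (a * N))) * expMoment P X (γ - θ) (N * 1) := by
        rw [lintegral_const_mul' _ _ ENNReal.ofReal_ne_top, mul_one]
        rfl
    _ = _ := by
        rw [expMoment_nat_mul hX _ N zero_le_one, mul_pow,
          ← ENNReal.ofReal_pow (Real.exp_nonneg _), ← Real.exp_nat_mul]
        ring_nf

lemma tendsto_setLIntegral_exp_of_lt (hX : LevyProcess P X) {γ : ℝ} (hγ : 0 < γ)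
    (hγ1 : ∫ ω, Real.exp (γ * X 1 ω) ∂P = 1)
    (hint : Integrable (fun ω => X 1 ω * Real.exp (γ * X 1 ω)) P) {a : ℝ}
    (ha : a < ∫ ω, X 1 ω * Real.exp (γ * X 1 ω) ∂P) :
    Tendsto (fun N : ℕ => ∫⁻ ω in {ω | X N ω ≤ a * N}, ENNReal.ofReal (Real.exp (γ * X N ω)) ∂P)
      atTop (𝓝 0) := by
  obtain ⟨θ, hθ, hrate⟩ := exists_ofReal_exp_mul_lintegral_lt_one (hX.meas 1) hγ hγ1 hint ha
  exact tendsto_of_tendsto_of_tendsto_of_le_of_le tendsto_const_nhds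
    (ENNReal.tendsto_pow_atTop_nhds_zero_of_lt_one hrate) (fun _ => zero_le)
    fun N => setLIntegral_exp_le_pow hX γ hθ.le a N

end LevyProcess

lemma eventually_le_mul_floor {t x : ℕ → ℝ} {v a : ℝ} (hva : v < a) (ht : Tendsto t atTop atTop)
    (hx : Tendsto (fun n => (x n - v * t n) / Real.sqrt (t n)) atTop (𝓝 0)) :
    ∀ᶠ n in atTop, x n ≤ a * ⌊t n⌋₊ := by
  set K := max 1 ((1 + |a|) / (a - v))
  filter_upwards [hx.eventually (eventually_lt_nhds one_pos),
    (Real.tendsto_sqrt_atTop.comp ht).eventually_ge_atTop K, ht.eventually_ge_atTop 0]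
    with n hxn hKn htn
  have hsqrt : 1 ≤ Real.sqrt (t n) := (le_max_left _ _).trans hKn
  have hdrift : x n - v * t n < Real.sqrt (t n) := by
    rwa [div_lt_one (by linarith)] at hxn
  have hK : 1 + |a| ≤ (a - v) * Real.sqrt (t n) := by
    rw [← div_le_iff₀' (sub_pos.2 hva)]
    exact (le_max_right _ _).trans hKn
  have hsq : Real.sqrt (t n) * Real.sqrt (t n) = t n := Real.mul_self_sqrt htn
  have hfloor : a * t n - |a| ≤ a * ⌊t n⌋₊ := by
    have h1 := Nat.floor_le htn
    have h2 := Nat.sub_one_lt_floor (t n)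
    rcases le_or_gt 0 a with ha | ha
    · rw [abs_of_nonneg ha]; nlinarith
    · nlinarith [neg_abs_le a]
  have hgrowth : Real.sqrt (t n) + |a| ≤ (a - v) * t n := by
    have := mul_le_mul_of_nonneg_right hK (Real.sqrt_nonneg (t n))
    nlinarith [abs_nonneg a]
  linarith

open LevyProcess in
theorem ruin_after_t_vanishes_general
    {Ω : Type*} [MeasurableSpace Ω] (P : Measure Ω) [IsProbabilityMeasure P]
    (X : ℝ → Ω → ℝ) (hX : LevyProcess P X)
    (γ : ℝ) (hγpos : 0 < γ)
    (hγ : ∫ ω, Real.exp (γ * X 1 ω) ∂P = 1)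
    -- `ψ'(γ) = E[X₁ e^{γ X₁}]` finite and positive
    (hmint : Integrable (fun ω => X 1 ω * Real.exp (γ * X 1 ω)) P)
    (m : ℝ) (hm : m = ∫ ω, X 1 ω * Real.exp (γ * X 1 ω) ∂P)
    (v : ℝ) (hv : v < m)
    (t x : ℕ → ℝ) (ht : Tendsto t atTop atTop)
    (hx : Tendsto (fun n => (x n - v * t n) / Real.sqrt (t n)) atTop (nhds 0)) :
    Tendsto (fun n => Real.exp (γ * x n) *
        (P {ω | (∀ s : ℝ, 0 ≤ s → s ≤ t n → X s ω ≤ x n) ∧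
            ∃ s : ℝ, 0 ≤ s ∧ x n < X s ω}).toReal)
      atTop (nhds 0) := by
  obtain ⟨a, hva, ham⟩ := exists_between hv
  have hdecay := tendsto_setLIntegral_exp_of_lt hX hγpos hγ hmint (hm ▸ ham)
  have hbound : ∀ᶠ n in atTop, ENNReal.ofReal (Real.exp (γ * x n)) * P (ruinAfter X (t n) (x n))
      ≤ ∫⁻ ω in {ω | X ⌊t n⌋₊ ω ≤ a * ⌊t n⌋₊}, ENNReal.ofReal (Real.exp (γ * X ⌊t n⌋₊ ω)) ∂P := by
    filter_upwards [eventually_le_mul_floor hva ht hx,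
      ht.eventually_ge_atTop 0] with n hxn htn
    have h := ofReal_exp_mul_measure_ruinAfter_le hX hγpos.le (expMoment_eq_one_of_integral hγ)
      (r := ⌊t n⌋₊) (Nat.cast_nonneg _) (by simpa using Nat.floor_le htn) (x n)
    rw [Rat.cast_natCast] at h
    exact h.trans (lintegral_mono_set fun ω (hω : _ ≤ x n) => hω.trans hxn)
  have hlim := tendsto_of_tendsto_of_tendsto_of_le_of_le' tendsto_const_nhds
    (hdecay.comp (tendsto_nat_floor_atTop.comp ht)) (Eventually.of_forall fun _ => zero_le) hbound
  have hreal := (ENNReal.tendsto_toReal ENNReal.zero_ne_top).comp hlim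
  rw [ENNReal.toReal_zero] at hreal
  refine hreal.congr fun n => ?_
  simp [ENNReal.toReal_mul, ruinAfter, Real.exp_nonneg]

/-- If `E[e^{γ X₁}] = 1` with `γ > 0`, `ψ'(γ) = E[X₁ e^{γ X₁}]` is finite and positive,
and `0 < v < ψ'(γ)`, then along `t_n → ∞`, `x_n = v t_n + o(t_n^{1/2})` one has
`e^{γ x_n} P(t_n < τ(x_n) < ∞) → 0`.
Here `{t < τ(x) < ∞} = {∀ s ∈ [0,t], X_s ≤ x} ∩ {∃ s ≥ 0, X_s > x}`. -/
theorem ruin_after_t_vanishes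
    {Ω : Type*} [MeasurableSpace Ω] (P : Measure Ω) [IsProbabilityMeasure P]
    (X : ℝ → Ω → ℝ) (hX : LevyProcess P X)
    (γ : ℝ) (hγpos : 0 < γ)
    (hγ : ∫ ω, Real.exp (γ * X 1 ω) ∂P = 1)
    -- `ψ'(γ) = E[X₁ e^{γ X₁}]` finite and positive
    (hmint : Integrable (fun ω => X 1 ω * Real.exp (γ * X 1 ω)) P)
    (m : ℝ) (hm : m = ∫ ω, X 1 ω * Real.exp (γ * X 1 ω) ∂P) (hmpos : 0 < m)
    (v : ℝ) (hvpos : 0 < v) (hv : v < m)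
    (t x : ℕ → ℝ) (ht : Tendsto t atTop atTop)
    (hx : Tendsto (fun n => (x n - v * t n) / Real.sqrt (t n)) atTop (nhds 0)) :
    Tendsto (fun n => Real.exp (γ * x n) *
        (P {ω | (∀ s : ℝ, 0 ≤ s → s ≤ t n → X s ω ≤ x n) ∧
            ∃ s : ℝ, 0 ≤ s ∧ x n < X s ω}).toReal)
      atTop (nhds 0) :=
  ruin_after_t_vanishes_general P X hX γ hγpos hγ hmint m hm v hv t x ht hx
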